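/- Let γ ≥ 1 and R⁻ > 0. For ε ∈ (0, R⁻) define m₁(ε) = (((R⁻ − ε)R⁻)²/(2R⁻ − ε))·((h(R⁻) − h(R⁻ − ε))/ε) and m₂(ε) = ((R⁻)²h(R⁻) − (R⁻ − ε)²h(R⁻ − ε))/(ε(2R⁻ − ε)), and let f_ε(R) = m₁(ε)/R + R·h(R) − m₂(ε)R for R > 0. Let R₀(ε) be the unique positive zero of f_ε'. Then R₀(ε) admits the expansion R₀(ε) = R⁻ − ε/2 + ((γ − 3)/(24R⁻))ε² + O(ε³) as ε → 0⁺; that is, the function ε ↦ R₀(ε) − R⁻ + ε/2 − ((γ − 3)/(24R⁻))ε² is O(ε³) as ε → 0 from the right. -/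

import Mathlib

open Real Filter Asymptotics

/-- The enthalpy: `h(ρ) = γ/(γ-1)·ρ^(γ-1)` for `γ > 1` and `h(ρ) = log ρ` for `γ = 1`. -/
noncomputable def enth (γ ρ : ℝ) : ℝ :=
  if γ = 1 then Real.log ρ else γ / (γ - 1) * ρ ^ (γ - 1)

/-- The constant `m₁(ε)` in the profile nonlinearity. -/
noncomputable def m1 (γ Rm ε : ℝ) : ℝ :=
  ((Rm - ε) * Rm) ^ 2 / (2 * Rm - ε) * ((enth γ Rm - enth γ (Rm - ε)) / ε)

/-- The constant `m₂(ε)` in the profile nonlinearity. -/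
noncomputable def m2 (γ Rm ε : ℝ) : ℝ :=
  (Rm ^ 2 * enth γ Rm - (Rm - ε) ^ 2 * enth γ (Rm - ε)) / (ε * (2 * Rm - ε))

/-!
We have `f_ε' = H - m₁/R² - m₂` with `H = h + c²` nondecreasing, so `f_ε'` increases with slope
at least `2 m₁ / R³`, and `m₁(ε) → γ (R⁻)^(γ+1) / 2 > 0`. Hence `R₀(ε)` lies within
`O(|f_ε'(ψ(ε))|)` of `ψ(ε) = R⁻ - ε/2 + ((γ-3)/(24R⁻)) ε²`, and it suffices to show
`f_ε'(ψ(ε)) = O(ε³)`. Multiplying by `ε (2R⁻ - ε) ψ²` clears the difference quotients in `m₁`, `m₂`;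
since `h' = γ ρ^(γ-2)` and `H' = γ² ρ^(γ-2)`, substituting the cubic Taylor expansions of `h` and
`H` at `R⁻` leaves an explicit polynomial in `ε` that vanishes to fourth order, plus `O(ε⁴)`
remainders.
-/

open Set Topology

theorem isBigO_pow_succ_of_hasDerivAt {f f' : ℝ → ℝ} {x₀ : ℝ} {n : ℕ}
    (hf : ∀ᶠ x in 𝓝 x₀, HasDerivAt f (f' x) x) (hf₀ : f x₀ = 0)
    (hf' : f' =O[𝓝 x₀] fun x => (x - x₀) ^ n) :
    f =O[𝓝 x₀] fun x => (x - x₀) ^ (n + 1) := by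
  obtain ⟨C, hC₀, hC⟩ := hf'.exists_nonneg
  obtain ⟨r, hr, hball⟩ := Metric.eventually_nhds_iff_ball.mp (hf.and hC.bound)
  refine IsBigO.of_bound C (Metric.eventually_nhds_iff_ball.mpr ⟨r, hr, fun x hx => ?_⟩)
  have hsub : Metric.closedBall x₀ (dist x x₀) ⊆ Metric.ball x₀ r :=
    Metric.closedBall_subset_ball hx
  have hbound : ∀ y ∈ Metric.closedBall x₀ (dist x x₀), ‖f' y‖ ≤ C * dist x x₀ ^ n := by
    intro y hy
    refine (hball y (hsub hy)).2.trans (mul_le_mul_of_nonneg_left ?_ hC₀)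
    rw [norm_pow, ← dist_eq_norm]
    exact pow_le_pow_left₀ dist_nonneg hy n
  have hmvt := (convex_closedBall x₀ (dist x x₀)).norm_image_sub_le_of_norm_hasDerivWithin_le
    (fun y hy => (hball y (hsub hy)).1.hasDerivWithinAt) hbound
    (Metric.mem_closedBall_self dist_nonneg) (Metric.mem_closedBall.2 le_rfl)
  rw [hf₀, sub_zero, ← dist_eq_norm] at hmvt
  rw [norm_pow, ← dist_eq_norm, pow_succ, ← mul_assoc]
  exact hmvt

theorem isBigO_pow_succ_of_hasDerivAt_zero {f f' : ℝ → ℝ} {n : ℕ}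
    (hf : ∀ᶠ x in 𝓝 0, HasDerivAt f (f' x) x) (hf₀ : f 0 = 0)
    (hf' : f' =O[𝓝 0] fun x => x ^ n) :
    f =O[𝓝 0] fun x => x ^ (n + 1) := by
  simpa using isBigO_pow_succ_of_hasDerivAt hf hf₀ (by simpa using hf')

theorem isBigO_div_self_of_isBigO_pow_succ {α : Type*} {l : Filter α} {f g : α → ℝ} {n : ℕ}
    (hf : f =O[l] fun x => g x ^ (n + 1)) : (fun x => f x / g x) =O[l] fun x => g x ^ n := by
  refine (hf.mul (isBigO_refl (fun x => (g x)⁻¹) l)).trans (IsBigO.of_bound 1 ?_)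
  refine Eventually.of_forall fun x => ?_
  rcases eq_or_ne (g x) 0 with hx | hx
  · simp [hx]
  · rw [pow_succ, mul_assoc, mul_inv_cancel₀ hx, mul_one, one_mul]

theorem hasDerivAt_one_add_rpow (p : ℝ) {u : ℝ} (hu : -1 < u) :
    HasDerivAt (fun u => (1 + u) ^ p) (p * (1 + u) ^ (p - 1)) u := by
  simpa using ((hasDerivAt_id u).const_add 1).rpow_const (p := p)
    (Or.inl (by rw [id]; linarith))

theorem isBigO_one_add_rpow_sub_taylor₁ (p : ℝ) :
    (fun u => (1 + u) ^ p - (1 + p * u)) =O[𝓝 0] fun u => u ^ 2 := by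
  refine isBigO_pow_succ_of_hasDerivAt_zero (f' := fun u => p * ((1 + u) ^ (p - 1) - 1))
    ?_ (by simp) ?_
  · filter_upwards [lt_mem_nhds (show (-1 : ℝ) < 0 by norm_num)] with u hu
    refine ((hasDerivAt_one_add_rpow p hu).fun_sub
      (((hasDerivAt_id u).const_mul p).const_add 1)).congr_deriv ?_
    ring
  · simpa using ((hasDerivAt_one_add_rpow (p - 1) (show (-1 : ℝ) < 0 by norm_num)).isBigO_sub
      |>.const_mul_left p)

theorem isBigO_one_add_rpow_sub_taylor₂ (p : ℝ) :
    (fun u => (1 + u) ^ p - (1 + p * u + p * (p - 1) / 2 * u ^ 2)) =O[𝓝 0] fun u => u ^ 3 := by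
  refine isBigO_pow_succ_of_hasDerivAt_zero
    (f' := fun u => p * ((1 + u) ^ (p - 1) - (1 + (p - 1) * u))) ?_ (by simp) ?_
  · filter_upwards [lt_mem_nhds (show (-1 : ℝ) < 0 by norm_num)] with u hu
    refine ((hasDerivAt_one_add_rpow p hu).fun_sub
      ((((hasDerivAt_id u).const_mul p).const_add 1).fun_add
        ((hasDerivAt_pow 2 u).const_mul (p * (p - 1) / 2)))).congr_deriv ?_
    simp only [Nat.cast_ofNat]
    ring
  · exact (isBigO_one_add_rpow_sub_taylor₁ (p - 1)).const_mul_left p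

/-- The cubic Taylor polynomial at `0` of `u ↦ ∫₀ᵘ (1 + s) ^ p ds`. -/
noncomputable def primitiveTaylor₃ (p u : ℝ) : ℝ := u + p / 2 * u ^ 2 + p * (p - 1) / 6 * u ^ 3

noncomputable def cubicRemainder (g : ℝ → ℝ) (C p a u : ℝ) : ℝ :=
  g (a * (1 + u)) - g a - C * a ^ p * a * primitiveTaylor₃ p u

theorem isBigO_cubicRemainder {g : ℝ → ℝ} {a C p : ℝ} (ha : 0 < a)
    (hg : ∀ x, 0 < x → HasDerivAt g (C * x ^ p) x) :
    cubicRemainder g C p a =O[𝓝 0] fun u => u ^ 4 := by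
  refine isBigO_pow_succ_of_hasDerivAt_zero (f' := fun u => C * a ^ p * a *
    ((1 + u) ^ p - (1 + p * u + p * (p - 1) / 2 * u ^ 2))) ?_
    (by simp [cubicRemainder, primitiveTaylor₃]) ?_
  · filter_upwards [lt_mem_nhds (show (-1 : ℝ) < 0 by norm_num)] with u hu
    have hpos : 0 < 1 + u := by linarith
    have hcomp := (hg _ (mul_pos ha hpos)).comp u (((hasDerivAt_id u).const_add 1).const_mul a)
    have hcubic := (((hasDerivAt_id u).fun_add ((hasDerivAt_pow 2 u).const_mul (p / 2))).fun_add
      ((hasDerivAt_pow 3 u).const_mul (p * (p - 1) / 6))).const_mul (C * a ^ p * a)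
    refine ((hcomp.sub_const (g a)).fun_sub hcubic).congr_deriv ?_
    rw [mul_rpow ha.le hpos.le]
    simp only [Nat.cast_ofNat]
    ring
  · exact (isBigO_one_add_rpow_sub_taylor₂ p).const_mul_left _

theorem two_mul_sub_div_pow_three_le_inv_sq_sub {y z : ℝ} (hy : 0 < y) (hz : 0 < z) :
    2 * (z - y) / z ^ 3 ≤ 1 / y ^ 2 - 1 / z ^ 2 := by
  have h : 1 / y ^ 2 - 1 / z ^ 2 - 2 * (z - y) / z ^ 3 =
      (z - y) ^ 2 * (z + 2 * y) / (y ^ 2 * z ^ 3) := by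
    field_simp
    ring
  have : 0 ≤ (z - y) ^ 2 * (z + 2 * y) / (y ^ 2 * z ^ 3) := by positivity
  linarith

theorem abs_sub_le_of_root {H : ℝ → ℝ} (hH : MonotoneOn H (Ioi 0)) {m n r x δ b : ℝ}
    (hm : 0 < m) (hr : 0 < r) (hroot : H r - m / r ^ 2 - n = 0) (hδ : 0 ≤ δ)
    (hxδ : 0 < x - δ) (hb : x + δ ≤ b) (hx : b ^ 3 * |H x - m / x ^ 2 - n| ≤ 2 * m * δ) :
    |r - x| ≤ δ := by
  set G := fun R => H R - m / R ^ 2 - n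
  have hstep : ∀ y z, 0 < y → y ≤ z → G y + 2 * m * (z - y) / z ^ 3 ≤ G z := by
    intro y z hy hyz
    have hz : 0 < z := hy.trans_le hyz
    have hinv := mul_le_mul_of_nonneg_left (two_mul_sub_div_pow_three_le_inv_sq_sub hy hz) hm.le
    have hHyz := hH hy hz hyz
    simp only [G]
    linarith [show m * (2 * (z - y) / z ^ 3) = 2 * m * (z - y) / z ^ 3 by ring,
      show m * (1 / y ^ 2 - 1 / z ^ 2) = m / y ^ 2 - m / z ^ 2 by ring]
  have hlt : ∀ y z, 0 < y → y < z → G y < G z := by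
    intro y z hy hyz
    have hslope : 0 < 2 * m * (z - y) / z ^ 3 := by
      have hz := hy.trans hyz
      have hzy := sub_pos.2 hyz
      positivity
    linarith [hstep y z hy hyz.le]
  have hGx : |G x| ≤ 2 * m * δ / b ^ 3 := by
    rw [le_div_iff₀ (pow_pos (by linarith) 3), mul_comm]
    exact hx
  have hbδ : 2 * m * δ / b ^ 3 ≤ 2 * m * δ / (x + δ) ^ 3 :=
    div_le_div_of_nonneg_left (by positivity) (pow_pos (by linarith) 3) (by gcongr; linarith)
  have hbδ' : 2 * m * δ / b ^ 3 ≤ 2 * m * δ / x ^ 3 :=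
    div_le_div_of_nonneg_left (by positivity) (pow_pos (by linarith) 3) (by gcongr <;> linarith)
  have hup : 0 ≤ G (x + δ) := by
    have := hstep x (x + δ) (by linarith) (by linarith)
    rw [add_sub_cancel_left] at this
    linarith [neg_abs_le (G x)]
  have hlow : G (x - δ) ≤ 0 := by
    have := hstep (x - δ) x hxδ (by linarith)
    rw [sub_sub_cancel] at this
    linarith [le_abs_self (G x)]
  rw [abs_sub_le_iff]
  constructor
  · by_contra! h
    linarith [hlt (x + δ) r (by linarith) (by linarith)]
  · by_contra! h
    linarith [hlt r (x - δ) hr (by linarith)]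

theorem isBigO_root_sub {α : Type*} {l : Filter α} {H : ℝ → ℝ} (hH : MonotoneOn H (Ioi 0))
    {m n r x k : α → ℝ} {L x₀ : ℝ} (hL : 0 < L) (hx₀ : 0 < x₀) (hm : Tendsto m l (𝓝 L))
    (hx : Tendsto x l (𝓝 x₀)) (hk : Tendsto k l (𝓝 0))
    (hroot : ∀ᶠ t in l, 0 < r t ∧ H (r t) - m t / r t ^ 2 - n t = 0)
    (happrox : (fun t => H (x t) - m t / x t ^ 2 - n t) =O[l] k) :
    (fun t => r t - x t) =O[l] k := by
  set g := fun t => H (x t) - m t / x t ^ 2 - n t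
  set δ := fun t => (2 * x₀) ^ 3 / 2 * |g t| * (m t)⁻¹
  have hδ : Tendsto δ l (𝓝 0) := by
    simpa using ((happrox.trans_tendsto hk).abs.const_mul ((2 * x₀) ^ 3 / 2)).mul
      (hm.inv₀ hL.ne')
  have hlo : ∀ᶠ t in l, 0 < x t - δ t := (hx.sub hδ).eventually (lt_mem_nhds (by simpa using hx₀))
  have hhi : ∀ᶠ t in l, x t + δ t < 2 * x₀ := (hx.add hδ).eventually (gt_mem_nhds (by linarith))
  have hbound : ∀ᶠ t in l, ‖r t - x t‖ ≤ δ t := by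
    filter_upwards [hm.eventually (lt_mem_nhds hL), hroot, hlo, hhi] with t hmt ⟨hrt, hroot⟩ hlo hhi
    have hδt : 0 ≤ δ t := by positivity
    refine abs_sub_le_of_root hH hmt hrt hroot hδt hlo hhi.le (le_of_eq ?_)
    simp only [δ, g]
    field_simp
  have hδO : δ =O[l] k := by
    simpa using (happrox.abs_left.const_mul_left ((2 * x₀) ^ 3 / 2)).mul
      ((hm.inv₀ hL.ne').isBigO_one ℝ)
  exact (IsBigO.of_norm_eventuallyLE hbound).trans hδO

theorem hasDerivAt_enth (γ : ℝ) {x : ℝ} (hx : 0 < x) :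
    HasDerivAt (enth γ) (γ * x ^ (γ - 2)) x := by
  by_cases hγ : γ = 1
  · subst hγ
    have he : enth 1 = log := funext fun ρ => if_pos rfl
    have hpow : (1 : ℝ) * x ^ ((1 : ℝ) - 2) = x⁻¹ := by norm_num [rpow_neg_one]
    simpa [he, hpow] using hasDerivAt_log hx.ne'
  · have hγ' : γ - 1 ≠ 0 := sub_ne_zero.2 hγ
    have he : enth γ = fun ρ => γ / (γ - 1) * ρ ^ (γ - 1) := funext fun ρ => if_neg hγ
    rw [he]
    refine ((hasDerivAt_rpow_const (Or.inl hx.ne')).const_mul (γ / (γ - 1))).congr_deriv ?_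
    rw [show γ - 1 - 1 = γ - 2 by ring]
    field_simp

/-- `h + c²`, where `c² = γ ρ^(γ-1)` is the squared sound speed; it is the derivative of
`ρ ↦ ρ h(ρ)`. -/
noncomputable def enthPlusSoundSq (γ ρ : ℝ) : ℝ := enth γ ρ + γ * ρ ^ (γ - 1)

theorem hasDerivAt_enthPlusSoundSq (γ : ℝ) {x : ℝ} (hx : 0 < x) :
    HasDerivAt (enthPlusSoundSq γ) (γ ^ 2 * x ^ (γ - 2)) x := by
  refine ((hasDerivAt_enth γ hx).add
    ((hasDerivAt_rpow_const (p := γ - 1) (Or.inl hx.ne')).const_mul γ)).congr_deriv ?_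
  rw [show γ - 1 - 1 = γ - 2 by ring]
  ring

theorem enthPlusSoundSq_eq (γ : ℝ) {a : ℝ} (ha : 0 < a) :
    enthPlusSoundSq γ a = enth γ a + γ * a ^ (γ - 2) * a := by
  rw [enthPlusSoundSq, show γ - 1 = γ - 2 + 1 by ring, rpow_add_one ha.ne']
  ring

theorem monotoneOn_enthPlusSoundSq (γ : ℝ) : MonotoneOn (enthPlusSoundSq γ) (Ioi 0) :=
  monotoneOn_of_hasDerivWithinAt_nonneg (convex_Ioi 0)
    (fun x hx => (hasDerivAt_enthPlusSoundSq γ hx).continuousAt.continuousWithinAt)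
    (fun x hx => (hasDerivAt_enthPlusSoundSq γ (interior_subset hx)).hasDerivWithinAt)
    (fun x hx => by have : 0 < x := interior_subset hx; positivity)

theorem hasDerivAt_profile (γ m n : ℝ) {R : ℝ} (hR : 0 < R) :
    HasDerivAt (fun R => m / R + R * enth γ R - n * R)
      (enthPlusSoundSq γ R - m / R ^ 2 - n) R := by
  have h := (((hasDerivAt_inv hR.ne').const_mul m).add
    ((hasDerivAt_id' R).fun_mul (hasDerivAt_enth γ hR))).fun_sub ((hasDerivAt_id' R).const_mul n)
  simp only [← div_eq_mul_inv] at h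
  refine h.congr_deriv ?_
  rw [enthPlusSoundSq_eq γ hR]
  field_simp
  ring

noncomputable def profileDeriv (γ Rm ε R : ℝ) : ℝ :=
  enthPlusSoundSq γ R - m1 γ Rm ε / R ^ 2 - m2 γ Rm ε

theorem tendsto_m1 (γ : ℝ) {a : ℝ} (ha : 0 < a) :
    Tendsto (m1 γ a) (𝓝[>] 0) (𝓝 (a ^ 3 / 2 * (γ * a ^ (γ - 2)))) := by
  have hd : HasDerivAt (fun ε => enth γ (a - ε)) (γ * a ^ (γ - 2) * -1) 0 := by
    simpa [Function.comp_def] using (hasDerivAt_enth γ (x := a - 0) (by simpa using ha)).comp 0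
      ((hasDerivAt_id (0 : ℝ)).const_sub a)
  have hslope : Tendsto (fun ε => (enth γ a - enth γ (a - ε)) / ε) (𝓝[>] 0)
      (𝓝 (γ * a ^ (γ - 2))) := by
    have := hd.tendsto_slope_zero_right.neg
    simp only [zero_add, sub_zero, smul_eq_mul, mul_neg, mul_one, neg_neg] at this
    refine this.congr fun ε => ?_
    rw [div_eq_inv_mul, ← mul_neg, neg_sub]
  have hcoef : Tendsto (fun ε => ((a - ε) * a) ^ 2 / (2 * a - ε)) (𝓝[>] 0) (𝓝 (a ^ 3 / 2)) := by
    have hc : ContinuousAt (fun ε => ((a - ε) * a) ^ 2 / (2 * a - ε)) 0 :=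
      ContinuousAt.div (by fun_prop) (by fun_prop) (by simp [ha.ne'])
    have : ((a - 0) * a) ^ 2 / (2 * a - 0) = a ^ 3 / 2 := by
      field_simp
      ring
    rw [← this]
    exact hc.tendsto.mono_left nhdsWithin_le_nhds
  exact hcoef.mul hslope

/-- `(R₀(ε) - R⁻) / R⁻` to second order, in the variable `v = ε / (2 R⁻)`. -/
noncomputable def expansionShift (γ v : ℝ) : ℝ := -v + (γ - 3) / 6 * v ^ 2

@[fun_prop]
theorem continuous_expansionShift (γ : ℝ) : Continuous (expansionShift γ) := by
  unfold expansionShift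
  fun_prop

theorem isBigO_expansionShift (γ : ℝ) : expansionShift γ =O[𝓝 0] fun v => v := by
  have h : expansionShift γ = fun v => v * (-1 + (γ - 3) / 6 * v) := by
    ext v
    simp only [expansionShift]
    ring
  rw [h]
  simpa using (isBigO_refl (fun v : ℝ => v) _).mul
    ((show Continuous fun v : ℝ => -1 + (γ - 3) / 6 * v by fun_prop).continuousAt.isBigO_one ℝ)

/-- The cubic Taylor approximation of `4 v (1 - v) (1 + δ)² f_ε'(R⁻ (1 + δ)) / (γ (R⁻)^(γ-1))`,
where `ε = 2 R⁻ v` and `δ = expansionShift γ v`. -/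
noncomputable def profileDerivTaylor (γ v : ℝ) : ℝ :=
  4 * v * (1 - v) * (1 + expansionShift γ v) ^ 2 *
      (1 + γ * primitiveTaylor₃ (γ - 2) (expansionShift γ v)) +
    (1 - 2 * v) ^ 2 * (1 + (1 + expansionShift γ v) ^ 2) * primitiveTaylor₃ (γ - 2) (-2 * v)

theorem isBigO_profileDerivTaylor (γ : ℝ) :
    profileDerivTaylor γ =O[𝓝 0] fun v => v ^ 4 := by
  obtain ⟨β, rfl⟩ : ∃ β, γ = β + 3 := ⟨γ - 3, by ring⟩
  set S : ℝ → ℝ := fun v =>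
    (-4 / 3 * β - 2 / 3 * β ^ 2 - 4 / 3 * β ^ 3) +
    (-2 + 2 * β + 43 / 9 * β ^ 2 + 6 * β ^ 3 + 7 / 18 * β ^ 4) * v +
    (2 + 2 * β - 73 / 9 * β ^ 2 - 92 / 9 * β ^ 3 - 11 / 6 * β ^ 4 - 1 / 18 * β ^ 5) * v ^ 2 +
    (-2 * β + 10 / 3 * β ^ 2 + 427 / 54 * β ^ 3 + 355 / 108 * β ^ 4 + 25 / 81 * β ^ 5 +
      1 / 324 * β ^ 6) * v ^ 3 +
    (-2 / 3 * β ^ 2 - 77 / 27 * β ^ 3 - 97 / 36 * β ^ 4 - 31 / 54 * β ^ 5 -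
      1 / 36 * β ^ 6) * v ^ 4 +
    (14 / 27 * β ^ 3 + 197 / 216 * β ^ 4 + 49 / 108 * β ^ 5 + 119 / 1944 * β ^ 6 +
      1 / 972 * β ^ 7) * v ^ 5 +
    (-7 / 72 * β ^ 4 - 91 / 648 * β ^ 5 - 91 / 1944 * β ^ 6 - 7 / 1944 * β ^ 7) * v ^ 6 +
    (5 / 648 * β ^ 5 + 41 / 3888 * β ^ 6 + 17 / 5832 * β ^ 7 + 1 / 11664 * β ^ 8) * v ^ 7 +
    (-1 / 3888 * β ^ 6 - 1 / 2916 * β ^ 7 - 1 / 11664 * β ^ 8) * v ^ 8 with hS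
  have hfactor : profileDerivTaylor (β + 3) = fun v => v ^ 4 * S v := by
    ext v
    simp only [profileDerivTaylor, expansionShift, primitiveTaylor₃, hS]
    ring
  rw [hfactor]
  simpa using (isBigO_refl (fun v : ℝ => v ^ 4) (𝓝 0)).mul
    ((show Continuous S by fun_prop).continuousAt.isBigO_one ℝ)

theorem mul_profileDeriv_scaled (γ : ℝ) {a v δ : ℝ} (ha : 0 < a) (hv : v ≠ 0) (hv₁ : v ≠ 1)
    (hδ : 1 + δ ≠ 0) :
    4 * v * (1 - v) * (1 + δ) ^ 2 * profileDeriv γ a (2 * a * v) (a * (1 + δ)) =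
      4 * v * (1 - v) * (1 + δ) ^ 2 * (enthPlusSoundSq γ (a * (1 + δ)) - enth γ a) +
        (1 - 2 * v) ^ 2 * (1 + (1 + δ) ^ 2) * (enth γ (a * (1 + -2 * v)) - enth γ a) := by
  have h₁ : 1 - v ≠ 0 := sub_ne_zero.2 hv₁.symm
  have h₂ : 2 * a - 2 * a * v ≠ 0 := by
    rw [show 2 * a - 2 * a * v = 2 * a * (1 - v) by ring]
    exact mul_ne_zero (by positivity) h₁
  simp only [profileDeriv, m1, m2]
  rw [show a - 2 * a * v = a * (1 + -2 * v) by ring]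
  field_simp
  ring

theorem mul_profileDeriv_expansionShift (γ : ℝ) {a v : ℝ} (ha : 0 < a) (hv : v ≠ 0)
    (hv₁ : v ≠ 1) (hδ : 1 + expansionShift γ v ≠ 0) :
    4 * v * (1 - v) * (1 + expansionShift γ v) ^ 2 *
        profileDeriv γ a (2 * a * v) (a * (1 + expansionShift γ v)) =
      γ * a ^ (γ - 2) * a * profileDerivTaylor γ v +
        4 * v * (1 - v) * (1 + expansionShift γ v) ^ 2 *
          cubicRemainder (enthPlusSoundSq γ) (γ ^ 2) (γ - 2) a (expansionShift γ v) +
        (1 - 2 * v) ^ 2 * (1 + (1 + expansionShift γ v) ^ 2) *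
          cubicRemainder (enth γ) γ (γ - 2) a (-2 * v) := by
  rw [mul_profileDeriv_scaled γ ha hv hv₁ hδ]
  simp only [profileDerivTaylor, cubicRemainder, enthPlusSoundSq_eq γ ha]
  ring

theorem isBigO_profileDeriv_scaled (γ : ℝ) {a : ℝ} (ha : 0 < a) :
    (fun v => profileDeriv γ a (2 * a * v) (a * (1 + expansionShift γ v)))
      =O[𝓝[>] 0] fun v => v ^ 3 := by
  set δ := expansionShift γ
  have hr₁ : (fun v => cubicRemainder (enth γ) γ (γ - 2) a (-2 * v)) =O[𝓝 0] fun v => v ^ 4 :=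
    ((isBigO_cubicRemainder ha fun x hx => hasDerivAt_enth γ hx).comp_tendsto
      ((continuous_const_mul (-2)).tendsto' 0 0 (by simp))).trans
      (((isBigO_refl (fun v : ℝ => v) _).const_mul_left (-2)).pow 4)
  have hr₂ : (fun v => cubicRemainder (enthPlusSoundSq γ) (γ ^ 2) (γ - 2) a (δ v))
      =O[𝓝 0] fun v => v ^ 4 :=
    ((isBigO_cubicRemainder ha fun x hx => hasDerivAt_enthPlusSoundSq γ hx).comp_tendsto
      ((isBigO_expansionShift γ).trans_tendsto tendsto_id)).trans ((isBigO_expansionShift γ).pow 4)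
  have hnum : (fun v => γ * a ^ (γ - 2) * a * profileDerivTaylor γ v +
      4 * v * (1 - v) * (1 + δ v) ^ 2 * cubicRemainder (enthPlusSoundSq γ) (γ ^ 2) (γ - 2) a (δ v) +
      (1 - 2 * v) ^ 2 * (1 + (1 + δ v) ^ 2) * cubicRemainder (enth γ) γ (γ - 2) a (-2 * v))
      =O[𝓝 0] fun v => v ^ 4 := by
    have h₂ := ((show Continuous fun v => 4 * v * (1 - v) * (1 + δ v) ^ 2 by fun_prop)
      |>.continuousAt.isBigO_one ℝ).mul hr₂
    have h₃ := ((show Continuous fun v => (1 - 2 * v) ^ 2 * (1 + (1 + δ v) ^ 2) by fun_prop)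
      |>.continuousAt.isBigO_one ℝ).mul hr₁
    simp only [one_mul] at h₂ h₃
    exact (((isBigO_profileDerivTaylor γ).const_mul_left _).add h₂).add h₃
  refine ((isBigO_div_self_of_isBigO_pow_succ (hnum.mono nhdsWithin_le_nhds)).mul
    (((show ContinuousAt (fun v => (4 * (1 - v) * (1 + δ v) ^ 2)⁻¹) 0 from
      ContinuousAt.inv₀ (by fun_prop) (by simp [δ, expansionShift])).isBigO_one ℝ).mono
        nhdsWithin_le_nhds)).congr' ?_ (by simp)
  have hnear : ∀ᶠ v in 𝓝 (0 : ℝ), v < 1 ∧ 1 + δ v ≠ 0 :=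
    (gt_mem_nhds one_pos).and ((continuous_const.add (continuous_expansionShift γ)).continuousAt
      |>.eventually_ne (by simp [expansionShift]))
  filter_upwards [self_mem_nhdsWithin, nhdsWithin_le_nhds hnear] with v (hv : 0 < v) ⟨hv₁, hδv⟩
  have h₁ : 1 - v ≠ 0 := sub_ne_zero.2 hv₁.ne'
  simp only [δ] at hδv ⊢
  rw [← mul_profileDeriv_expansionShift γ ha hv.ne' hv₁.ne hδv]
  generalize profileDeriv γ a (2 * a * v) (a * (1 + expansionShift γ v)) = E
  field_simp

theorem isBigO_profileDeriv_expansion (γ : ℝ) {a : ℝ} (ha : 0 < a) :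
    (fun ε => profileDeriv γ a ε (a - ε / 2 + (γ - 3) / (24 * a) * ε ^ 2))
      =O[𝓝[>] 0] fun ε => ε ^ 3 := by
  have hscale : Tendsto (fun ε => ε / (2 * a)) (𝓝[>] 0) (𝓝[>] 0) :=
    tendsto_nhdsWithin_iff.2 ⟨(continuous_id.div_const _).tendsto' 0 0 (by simp) |>.mono_left
      nhdsWithin_le_nhds, eventually_nhdsWithin_of_forall fun ε (hε : 0 < ε) => by
        simp only [mem_Ioi]; positivity⟩
  refine (((isBigO_profileDeriv_scaled γ ha).comp_tendsto hscale).congr_left fun ε => ?_).trans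
    (((isBigO_refl (fun ε : ℝ => ε) _).const_mul_left (2 * a)⁻¹).pow 3 |>.congr_left fun ε => ?_)
  · simp only [Function.comp_apply, expansionShift]
    congr 1
    · field_simp
    · field_simp
      ring
  · simp only [Function.comp_apply]
    ring

/-- Expansion of the unique positive critical point `R₀(ε)` of the profile nonlinearity:
`R₀(ε) = R⁻ − ε/2 + ((γ−3)/(24R⁻))ε² + O(ε³)` as `ε → 0⁺`. -/
theorem stmt11 (γ Rm : ℝ) (hγ : 1 ≤ γ) (hRm : 0 < Rm) (R₀ : ℝ → ℝ)
    (hR₀ : ∀ ε ∈ Set.Ioo (0:ℝ) Rm, 0 < R₀ ε ∧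
      deriv (fun R => m1 γ Rm ε / R + R * enth γ R - m2 γ Rm ε * R) (R₀ ε) = 0) :
    (fun ε => R₀ ε - Rm + ε / 2 - (γ - 3) / (24 * Rm) * ε ^ 2)
      =O[nhdsWithin 0 (Set.Ioi 0)] (fun ε => ε ^ 3) := by
  have hψ : Tendsto (fun ε => Rm - ε / 2 + (γ - 3) / (24 * Rm) * ε ^ 2) (𝓝[>] 0) (𝓝 Rm) :=
    ((show Continuous fun ε : ℝ => Rm - ε / 2 + (γ - 3) / (24 * Rm) * ε ^ 2 by fun_prop).tendsto'
      0 Rm (by simp)).mono_left nhdsWithin_le_nhds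
  have hroot : ∀ᶠ ε in 𝓝[>] 0, 0 < R₀ ε ∧
      enthPlusSoundSq γ (R₀ ε) - m1 γ Rm ε / R₀ ε ^ 2 - m2 γ Rm ε = 0 := by
    filter_upwards [self_mem_nhdsWithin, nhdsWithin_le_nhds (gt_mem_nhds hRm)] with ε hε hεRm
    obtain ⟨hpos, hcrit⟩ := hR₀ ε ⟨hε, hεRm⟩
    exact ⟨hpos, (hasDerivAt_profile γ _ _ hpos).deriv ▸ hcrit⟩
  have hL : 0 < Rm ^ 3 / 2 * (γ * Rm ^ (γ - 2)) := by
    have : 0 < γ := by linarith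
    positivity
  refine (isBigO_root_sub (monotoneOn_enthPlusSoundSq γ) hL hRm (tendsto_m1 γ hRm) hψ
    ((continuous_pow 3).tendsto' 0 0 (by simp) |>.mono_left nhdsWithin_le_nhds) hroot
    (isBigO_profileDeriv_expansion γ hRm)).congr_left fun ε => by ring
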